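/- arXiv:1004.2461 — 2 statements merged into one kernel-verified Lean document; each statement's English description precedes it below -/
import Mathlib

section
/- Let p, q be positive integers with q < p. Define a_{p,q} = 1/2 - (p^2 - 3q^2)/(4p^3) * sqrt(4p^2 - 3q^2). Then 0 < a_{p,q} < 1. -/
/-! With `x = q/p ∈ (0,1)`, the constant is `1/2 - c` where `c² = (1 - 3x²)² (4 - 3x²) / 16`, and
`(1 - 3x²)² (4 - 3x²) = 4 - 27 x² (1 - x²)²`; hence `c² < 1/4`, i.e. `|c| < 1/2`. -/

lemma sq_sub_three_mul_sq_sq_mul (p q : ℝ) :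
    (p ^ 2 - 3 * q ^ 2) ^ 2 * (4 * p ^ 2 - 3 * q ^ 2) =
      4 * p ^ 6 - 27 * q ^ 2 * (p ^ 2 - q ^ 2) ^ 2 := by
  ring

lemma abs_div_mul_sqrt_lt_half {p q : ℝ} (hq : 0 < q) (hpq : q < p) :
    |(p ^ 2 - 3 * q ^ 2) / (4 * p ^ 3) * √(4 * p ^ 2 - 3 * q ^ 2)| < 1 / 2 := by
  have hp : 0 < p := hq.trans hpq
  have hB : 0 ≤ 4 * p ^ 2 - 3 * q ^ 2 := by nlinarith
  have hgap : 0 < 27 * q ^ 2 * (p ^ 2 - q ^ 2) ^ 2 := by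
    have : 0 < p ^ 2 - q ^ 2 := by nlinarith
    positivity
  rw [← abs_of_pos (one_half_pos : (0 : ℝ) < 1 / 2), ← sq_lt_sq, mul_pow, div_pow,
    Real.sq_sqrt hB, div_mul_eq_mul_div, sq_sub_three_mul_sq_sq_mul,
    div_lt_iff₀ (by positivity)]
  linarith

/-- For positive integers `q < p`, the constant
`a_{p,q} = 1/2 - (p² - 3q²)/(4p³) · √(4p² - 3q²)` lies in `(0,1)`. -/
theorem stmt_0 (p q : ℕ) (hq : 0 < q) (hpq : q < p) :
    0 < (1/2 : ℝ) - ((p : ℝ)^2 - 3*(q : ℝ)^2)/(4*(p : ℝ)^3) *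
        Real.sqrt (4*(p : ℝ)^2 - 3*(q : ℝ)^2) ∧
    (1/2 : ℝ) - ((p : ℝ)^2 - 3*(q : ℝ)^2)/(4*(p : ℝ)^3) *
        Real.sqrt (4*(p : ℝ)^2 - 3*(q : ℝ)^2) < 1 := by
  obtain ⟨hlo, hhi⟩ := abs_lt.mp (abs_div_mul_sqrt_lt_half (p := (p : ℝ)) (q := (q : ℝ))
    (by exact_mod_cast hq) (by exact_mod_cast hpq))
  constructor <;> linarith
end

section
/- Let w_0, ..., w_n and d be positive real numbers with |w| := w_0 + ... + w_n satisfying d < |w|, and set w := w_0 * w_1 * ... * w_n. If d * (|w| - d)^n > w * n^n, then |w| - d > n * min_i w_i. -/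
/-! If `n · min wᵢ ≥ |w| - d`, put `t = (|w| - d) / n`, so that `wᵢ = t + aᵢ` with `aᵢ ≥ 0`.
Expanding the product, `∏ wᵢ ≥ tⁿ (t + ∑ aᵢ) = tⁿ d`, since `∑ aᵢ = |w| - (n + 1) t = d - t`.
Multiplying by `nⁿ` gives `nⁿ ∏ wᵢ ≥ d (|w| - d)ⁿ`, contradicting the Bishop inequality. -/

open Finset

theorem Finset.add_sum_mul_pow_card_le_prod_add_mul {ι R : Type*} [CommSemiring R] [PartialOrder R]
    [IsOrderedRing R] (s : Finset ι) {t : R} (ht : 0 ≤ t) {a : ι → R} (ha : ∀ i ∈ s, 0 ≤ a i) :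
    (t + ∑ i ∈ s, a i) * t ^ #s ≤ (∏ i ∈ s, (t + a i)) * t := by
  induction s using Finset.cons_induction with
  | empty => simp
  | cons j s hj ih =>
    have haj : 0 ≤ a j := ha j (mem_cons_self j s)
    have hsum : 0 ≤ ∑ i ∈ s, a i := sum_nonneg fun i hi ↦ ha i (mem_cons_of_mem hi)
    have two_factors : (t + (a j + ∑ i ∈ s, a i)) * t ≤ (t + a j) * (t + ∑ i ∈ s, a i) :=
      calc (t + (a j + ∑ i ∈ s, a i)) * t
          ≤ (t + (a j + ∑ i ∈ s, a i)) * t + a j * ∑ i ∈ s, a i :=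
            le_add_of_nonneg_right (mul_nonneg haj hsum)
        _ = (t + a j) * (t + ∑ i ∈ s, a i) := by ring
    rw [sum_cons, prod_cons, card_cons]
    calc (t + (a j + ∑ i ∈ s, a i)) * t ^ (#s + 1)
        = (t + (a j + ∑ i ∈ s, a i)) * t * t ^ #s := by ring
      _ ≤ (t + a j) * ((t + ∑ i ∈ s, a i) * t ^ #s) := by
          rw [← mul_assoc]; gcongr
      _ ≤ (t + a j) * ((∏ i ∈ s, (t + a i)) * t) :=
          mul_le_mul_of_nonneg_left (ih fun i hi ↦ ha i (mem_cons_of_mem hi)) (add_nonneg ht haj)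
      _ = (t + a j) * (∏ i ∈ s, (t + a i)) * t := by ring

theorem Fin.pow_mul_sum_sub_le_prod {R : Type*} [CommRing R] [LinearOrder R] [IsStrictOrderedRing R]
    {k : ℕ} {w : Fin (k + 1) → R} {t : R} (ht : 0 < t) (htw : ∀ i, t ≤ w i) :
    t ^ k * (∑ i, w i - k * t) ≤ ∏ i, w i := by
  have h := univ.add_sum_mul_pow_card_le_prod_add_mul ht.le (a := fun i ↦ w i - t)
    fun i _ ↦ sub_nonneg.mpr (htw i)
  have hsum : t + ∑ i, (w i - t) = ∑ i, w i - k * t := by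
    simp only [sum_sub_distrib, sum_const, nsmul_eq_mul]
    push_cast
    ring
  simp only [hsum, add_sub_cancel, card_univ, Fintype.card_fin, pow_succ] at h
  rw [← mul_assoc, mul_comm _ (t ^ k)] at h
  exact le_of_mul_le_mul_right h ht

theorem stmt_3_general (n : ℕ) (w : Fin (n+1) → ℝ)
    (d : ℝ) (hdlt : d < ∑ i, w i)
    (hbishop : d * ((∑ i, w i) - d)^n > (∏ i, w i) * (n : ℝ)^n) :
    (∑ i, w i) - d > (n : ℝ) * Finset.univ.inf' Finset.univ_nonempty w := by
  by_contra! h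
  rcases n.eq_zero_or_pos with rfl | hn_pos
  · simp only [CharP.cast_eq_zero, zero_mul] at h
    linarith
  have hn : (0 : ℝ) < n := Nat.cast_pos.mpr hn_pos
  obtain ⟨t, hnt⟩ : ∃ t : ℝ, n * t = (∑ i, w i) - d := ⟨_, mul_div_cancel₀ _ hn.ne'⟩
  have ht : 0 < t := pos_of_mul_pos_right (hnt ▸ sub_pos.mpr hdlt) hn.le
  have htw : ∀ i, t ≤ w i := fun i ↦
    (le_of_mul_le_mul_left (hnt ▸ h) hn).trans (inf'_le w (mem_univ i))
  have key := Fin.pow_mul_sum_sub_le_prod ht htw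
  rw [hnt, sub_sub_cancel] at key
  have not_bishop : d * ((∑ i, w i) - d) ^ n ≤ (∏ i, w i) * (n : ℝ) ^ n :=
    calc d * ((∑ i, w i) - d) ^ n = t ^ n * d * (n : ℝ) ^ n := by rw [← hnt]; ring
      _ ≤ (∏ i, w i) * (n : ℝ) ^ n := by gcongr
  exact not_bishop.not_gt hbishop

/-- Bishop obstruction implies Lichnerowicz obstruction for weighted homogeneous
hypersurface singularities: if `w₀,…,wₙ, d > 0` with `d < |w| = ∑ wᵢ` and
`d(|w| - d)ⁿ > (∏ wᵢ) nⁿ`, then `|w| - d > n · min_i wᵢ`. -/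
theorem stmt_3 (n : ℕ) (hn : 1 ≤ n) (w : Fin (n+1) → ℝ) (hw : ∀ i, 0 < w i)
    (d : ℝ) (hd : 0 < d) (hdlt : d < ∑ i, w i)
    (hbishop : d * ((∑ i, w i) - d)^n > (∏ i, w i) * (n : ℝ)^n) :
    (∑ i, w i) - d > (n : ℝ) * Finset.univ.inf' Finset.univ_nonempty w :=
  stmt_3_general n w d hdlt hbishop
end
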